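/- arXiv:1609.03225 — 2 statements merged into one kernel-verified Lean document; each statement's English description precedes it below -/
import Mathlib

section
/- Let S be a nontrivial proper subsemigroup of the positive rationals ℚ⁺ with 1 ∉ S, and let d = min(S ∩ ℕ). Let A be the 3 × 2 matrix with rows (d,0), (0,d), (d,d). Then A is image partition regular over S, but there do not exist k ∈ ℕ and a k × 3 rational matrix B such that {A x : x ∈ (S \ {0})²} ∩ (S \ {0})³ ⊆ {y ∈ (S \ {0})³ : B y = 0} ⊆ {A x : x ∈ S²} ∩ (S \ {0})³. -/
/-!
Image partition regularity: colour `s ∈ S` by the colour of `d * s`; Schur's theorem (via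
Hindman's) in the semigroup `S` gives `a, b` with `d a, d b, d (a + b)` monochromatic, and these
are the entries of `A (a, b)`.

No kernel description: `B` must vanish on `A (d, d) = d • (d, d, 2d)`, hence on `y = (d, d, 2d)`,
whose entries lie in `S`; but `y = A x` forces `d * x 0 = d`, i.e. `1 = x 0 ∈ S`.
-/

open scoped BigOperators

/-- Matrix–vector product over ℚ, via `finsum`. -/
noncomputable def mulVecQ {u v : Type} (A : u → v → ℚ) (x : v → ℚ) : u → ℚ :=
  fun i => ∑ᶠ j, A i j * x j

/-- `A` is image partition regular over `S`. -/
def IPRQ {u v : Type} (A : u → v → ℚ) (S : Set ℚ) : Prop :=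
  ∀ (k : ℕ) (φ : ℚ → Fin k), ∃ x : v → ℚ,
    (∀ j, x j ∈ S \ {0}) ∧ (∀ i, mulVecQ A x i ∈ S \ {0}) ∧
    (∀ i i', φ (mulVecQ A x i) = φ (mulVecQ A x i'))

open Matrix

theorem AddSubsemigroup.nsmul_mem_of_ne_zero {M : Type*} [AddMonoid M] (S : AddSubsemigroup M)
    {x : M} (hx : x ∈ S) {n : ℕ} (hn : n ≠ 0) : n • x ∈ S := by
  obtain ⟨n, rfl⟩ := Nat.exists_eq_succ_of_ne_zero hn
  induction n with
  | zero => simpa using hx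
  | succ n ih => simpa [succ_nsmul] using S.add_mem (ih n.succ_ne_zero) hx

theorem exists_add_monochromatic {M : Type*} [AddSemigroup M] [Nonempty M] {ι : Type*} [Finite ι]
    (c : M → ι) : ∃ a b : M, c a = c (a + b) ∧ c b = c (a + b) := by
  obtain ⟨_, ⟨i, rfl⟩, a, ha⟩ := Hindman.exists_FS_of_finite_cover (Set.range fun i => c ⁻¹' {i})
    (Set.finite_range _) fun x _ => Set.mem_sUnion.2 ⟨_, ⟨c x, rfl⟩, rfl⟩
  have h0 : c (a.get 0) = i := ha (Hindman.FS.singleton a 0)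
  have h1 : c (a.get 1) = i := ha (Hindman.FS.singleton a 1)
  have h01 : c (a.get 0 + a.get 1) = i := ha (Hindman.FS.add_two a 0 1 zero_lt_one)
  exact ⟨a.get 0, a.get 1, h0.trans h01.symm, h1.trans h01.symm⟩

theorem mulVecQ_eq_mulVec {u v : Type} [Fintype v] (A : u → v → ℚ) (x : v → ℚ) :
    mulVecQ A x = of A *ᵥ x := by
  ext i
  simp [mulVecQ, finsum_eq_sum_of_fintype, mulVec, dotProduct]

theorem mulVecQ_smul {u v : Type} [Fintype v] (A : u → v → ℚ) (c : ℚ) (x : v → ℚ) :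
    mulVecQ A (c • x) = c • mulVecQ A x := by
  simp only [mulVecQ_eq_mulVec, mulVec_smul]

def schurMatrix (d : ℚ) : Fin 3 → Fin 2 → ℚ := ![![d, 0], ![0, d], ![d, d]]

theorem mulVecQ_schurMatrix (d : ℚ) (x : Fin 2 → ℚ) :
    mulVecQ (schurMatrix d) x = ![d * x 0, d * x 1, d * (x 0 + x 1)] := by
  ext i
  fin_cases i <;> simp [mulVecQ_eq_mulVec, schurMatrix, mulVec, dotProduct, mul_add]

section PositiveSubsemigroup

variable (S : AddSubsemigroup ℚ) (hpos : ∀ s ∈ S, (0 : ℚ) < s) {d : ℕ} (hd : (d : ℚ) ∈ S)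
include hpos hd

theorem mulVecQ_schurMatrix_mem {x : Fin 2 → ℚ} (hx : ∀ j, x j ∈ S) (i : Fin 3) :
    mulVecQ (schurMatrix d) x i ∈ (S : Set ℚ) \ {0} := by
  have hdmul : ∀ {s}, s ∈ S → (d : ℚ) * s ∈ S := fun hs => by
    simpa [nsmul_eq_mul] using
      S.nsmul_mem_of_ne_zero hs (n := d) (by rintro rfl; simpa using hpos _ hd)
  have hmem : ∀ {s}, s ∈ S → s ∈ (S : Set ℚ) \ {0} := fun hs => ⟨hs, (hpos _ hs).ne'⟩
  rw [mulVecQ_schurMatrix]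
  fin_cases i
  exacts [hmem (hdmul (hx 0)), hmem (hdmul (hx 1)), hmem (hdmul (S.add_mem (hx 0) (hx 1)))]

theorem iprq_schurMatrix : IPRQ (schurMatrix d) S := by
  intro k φ
  have : Nonempty S := ⟨⟨d, hd⟩⟩
  obtain ⟨a, b, hab, hb⟩ := exists_add_monochromatic fun s : S => φ (d * s)
  have hx : ∀ j, ![(a : ℚ), b] j ∈ S := by
    intro j; fin_cases j
    exacts [a.2, b.2]
  refine ⟨![a, b], fun j => ⟨hx j, (hpos _ (hx j)).ne'⟩,
    mulVecQ_schurMatrix_mem S hpos hd hx, ?_⟩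
  have : ∀ i, φ (mulVecQ (schurMatrix d) ![a, b] i) = φ (d * (a + b : S)) := by
    intro i
    rw [mulVecQ_schurMatrix]
    fin_cases i
    exacts [hab, hb, rfl]
  intro i i'
  rw [this, this]

end PositiveSubsemigroup

theorem stmt9_general (S : AddSubsemigroup ℚ) (hpos : ∀ s ∈ S, (0 : ℚ) < s)
    (hone : (1 : ℚ) ∉ S)
    (d : ℕ) (hd : (d : ℚ) ∈ S)
    (A : Fin 3 → Fin 2 → ℚ)
    (hAdef : A = ![![(d : ℚ), 0], ![0, (d : ℚ)], ![(d : ℚ), (d : ℚ)]]) :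
    IPRQ A (S : Set ℚ) ∧
    ¬ ∃ (k : ℕ) (B : Fin k → Fin 3 → ℚ),
        ({y : Fin 3 → ℚ | ∃ x : Fin 2 → ℚ, (∀ j, x j ∈ (S : Set ℚ) \ {0}) ∧ y = mulVecQ A x} ∩
            {y : Fin 3 → ℚ | ∀ i, y i ∈ (S : Set ℚ) \ {0}} ⊆
          {y : Fin 3 → ℚ | (∀ i, y i ∈ (S : Set ℚ) \ {0}) ∧ ∀ l, mulVecQ B y l = 0}) ∧
        ({y : Fin 3 → ℚ | (∀ i, y i ∈ (S : Set ℚ) \ {0}) ∧ ∀ l, mulVecQ B y l = 0} ⊆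
          {y : Fin 3 → ℚ | ∃ x : Fin 2 → ℚ, (∀ j, x j ∈ (S : Set ℚ)) ∧ y = mulVecQ A x} ∩
            {y : Fin 3 → ℚ | ∀ i, y i ∈ (S : Set ℚ) \ {0}}) := by
  have hA : A = schurMatrix d := hAdef
  subst hA
  refine ⟨iprq_schurMatrix S hpos hd, ?_⟩
  rintro ⟨k, B, hsound, hcomplete⟩
  have hd0 : (d : ℚ) ≠ 0 := (hpos _ hd).ne'
  set y : Fin 3 → ℚ := ![d, d, d + d]
  have hAd : mulVecQ (schurMatrix d) ![(d : ℚ), d] = (d : ℚ) • y := by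
    rw [mulVecQ_schurMatrix]; ext i; fin_cases i <;> simp [y, mul_add]
  have hdd : ∀ j, ![(d : ℚ), d] j ∈ S := fun j => by fin_cases j <;> exact hd
  have hBy : ∀ l, mulVecQ B y l = 0 := by
    have hsol := (hsound ⟨⟨_, fun j => ⟨hdd j, (hpos _ (hdd j)).ne'⟩, hAd.symm⟩,
      hAd ▸ mulVecQ_schurMatrix_mem S hpos hd hdd⟩).2
    intro l
    simpa [mulVecQ_smul, hd0] using hsol l
  have hyS : ∀ i, y i ∈ (S : Set ℚ) \ {0} := by
    intro i; fin_cases i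
    exacts [⟨hd, hd0⟩, ⟨hd, hd0⟩, ⟨S.add_mem hd hd, (hpos _ (S.add_mem hd hd)).ne'⟩]
  obtain ⟨⟨x, hx, hyx⟩, -⟩ := hcomplete ⟨hyS, hBy⟩
  have hx0 : x 0 = 1 := by
    have := congrFun hyx 0
    rw [mulVecQ_schurMatrix] at this
    simpa [y, hd0] using this.symm
  exact hone (hx0 ▸ hx 0)

/-- let `S` be a nontrivial proper subsemigroup of the positive
rationals with `1 ∉ S` and `d = min (S ∩ ℕ)`. Let `A` be the `3 × 2` matrix with
rows `(d,0), (0,d), (d,d)`. Then `A` is image partition regular over `S`, but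
there are no `k ∈ ℕ` and `k × 3` rational matrix `B` with
`{A x : x ∈ (S\{0})²} ∩ (S\{0})³ ⊆ {y ∈ (S\{0})³ : B y = 0} ⊆ {A x : x ∈ S²} ∩ (S\{0})³`. -/
theorem stmt9 (S : AddSubsemigroup ℚ) (hpos : ∀ s ∈ S, (0 : ℚ) < s)
    (hne : ∃ s, s ∈ S) (hproper : (S : Set ℚ) ≠ {q : ℚ | 0 < q})
    (hone : (1 : ℚ) ∉ S)
    (d : ℕ) (hd : (d : ℚ) ∈ S) (hdmin : ∀ n : ℕ, (n : ℚ) ∈ S → d ≤ n)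
    (A : Fin 3 → Fin 2 → ℚ)
    (hAdef : A = ![![(d : ℚ), 0], ![0, (d : ℚ)], ![(d : ℚ), (d : ℚ)]]) :
    IPRQ A (S : Set ℚ) ∧
    ¬ ∃ (k : ℕ) (B : Fin k → Fin 3 → ℚ),
        ({y : Fin 3 → ℚ | ∃ x : Fin 2 → ℚ, (∀ j, x j ∈ (S : Set ℚ) \ {0}) ∧ y = mulVecQ A x} ∩
            {y : Fin 3 → ℚ | ∀ i, y i ∈ (S : Set ℚ) \ {0}} ⊆
          {y : Fin 3 → ℚ | (∀ i, y i ∈ (S : Set ℚ) \ {0}) ∧ ∀ l, mulVecQ B y l = 0}) ∧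
        ({y : Fin 3 → ℚ | (∀ i, y i ∈ (S : Set ℚ) \ {0}) ∧ ∀ l, mulVecQ B y l = 0} ⊆
          {y : Fin 3 → ℚ | ∃ x : Fin 2 → ℚ, (∀ j, x j ∈ (S : Set ℚ)) ∧ y = mulVecQ A x} ∩
            {y : Fin 3 → ℚ | ∀ i, y i ∈ (S : Set ℚ) \ {0}}) :=
  stmt9_general S hpos hone d hd A hAdef
end

section
/- Let S be a nontrivial subgroup of (ℚ,+), let j, u ∈ ℕ, let B be a j × u rational matrix that is kernel partition regular over ℚ, let O be the j × u zero matrix, I the u × u identity, and c ∈ S \ {0}. Then the (j+u) × 3u block matrix D = [[B, O, O], [I, cI, −cI]] is kernel partition regular over S. -/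
open scoped BigOperators

/-- `M` is kernel partition regular over `T`. -/
def KPRQ {u v : Type} (M : u → v → ℚ) (T : Set ℚ) : Prop :=
  ∀ (k : ℕ) (φ : ℚ → Fin k), ∃ x : v → ℚ,
    (∀ j, x j ∈ T \ {0}) ∧ (∀ i, mulVecQ M x i = 0) ∧
    (∀ j j', φ (x j) = φ (x j'))

lemma compactColoring {α ι : Type} (K : ℕ) (pts : ι → Finset α)
    (Good : ι → (α → Fin K) → Prop)
    (hdep : ∀ i (χ χ' : α → Fin K), (∀ a ∈ pts i, χ a = χ' a) → Good i χ → Good i χ')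
    (hex : ∀ χ, ∃ i, Good i χ) :
    ∃ F : Finset α, ∀ χ, ∃ i, pts i ⊆ F ∧ Good i χ := by
  classical
  by_contra h
  push_neg at h
  choose χF hχF using h
  letI : TopologicalSpace (Fin K) := ⊥
  haveI : DiscreteTopology (Fin K) := ⟨rfl⟩
  set V : Finset α → Set (α → Fin K) := fun F =>
    {χ | ∀ i, pts i ⊆ F → ¬ Good i χ} with hV
  have hdir : Directed (· ⊇ ·) V := by
    intro F F'
    refine ⟨F ∪ F', fun χ hχ i hi => hχ i (hi.trans Finset.subset_union_left),
      fun χ hχ i hi => hχ i (hi.trans Finset.subset_union_right)⟩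
  have hne : ∀ F, (V F).Nonempty := by
    intro F
    exact ⟨χF F, fun i hi hg => hχF F i hi hg⟩
  have hopen : ∀ i, IsOpen {χ : α → Fin K | Good i χ} := by
    intro i
    rw [isOpen_iff_mem_nhds]
    intro χ hχ
    have : {χ' : α → Fin K | ∀ a ∈ pts i, χ' a = χ a} ∈ nhds χ := by
      have : {χ' : α → Fin K | ∀ a ∈ pts i, χ' a = χ a}
          = ⋂ a ∈ pts i, {χ' : α → Fin K | χ' a = χ a} := by
        ext χ'; simp
      rw [this]
      refine (Filter.biInter_mem (pts i).finite_toSet).2 ?_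
      intro a _
      have hc : Continuous fun χ' : α → Fin K => χ' a := continuous_apply a
      have : IsOpen {χ' : α → Fin K | χ' a = χ a} :=
        hc.isOpen_preimage {χ a} (isOpen_discrete _)
      exact this.mem_nhds rfl
    exact Filter.mem_of_superset this (fun χ' hχ' => hdep i χ χ' (fun a ha => (hχ' a ha).symm) hχ)
  have hclosed : ∀ F, IsClosed (V F) := by
    intro F
    have : V F = ⋂ (i : {i // pts i ⊆ F}), {χ | ¬ Good i.1 χ} := by
      ext χ; simp [hV, Set.mem_iInter]
    rw [this]
    exact isClosed_iInter fun i => (hopen i.1).isClosed_compl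
  have hcomp : ∀ F, IsCompact (V F) := fun F => (hclosed F).isCompact
  obtain ⟨χ, hχ⟩ :=
    IsCompact.nonempty_iInter_of_directed_nonempty_isCompact_isClosed V hdir hne hcomp hclosed
  obtain ⟨i, hi⟩ := hex χ
  have := Set.mem_iInter.1 hχ (pts i)
  exact this i (le_refl _) hi

lemma vdwFin (K : ℕ) (S : Finset ℕ) :
    ∃ Mv : ℕ, ∀ ψ : ℕ → Fin K, ∃ a b, 0 < a ∧ (∀ s ∈ S, a * s + b ≤ Mv) ∧
      ∃ r, ∀ s ∈ S, ψ (a * s + b) = r := by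
  classical
  obtain ⟨F, hF⟩ := compactColoring (α := ℕ) (ι := ℕ × ℕ) K
    (fun ab => S.image (fun s => ab.1 * s + ab.2))
    (fun ab ψ => 0 < ab.1 ∧ ∃ r, ∀ s ∈ S, ψ (ab.1 * s + ab.2) = r)
    (by
      rintro ⟨a, b⟩ χ χ' hagree ⟨ha, r, hr⟩
      exact ⟨ha, r, fun s hs => by
        rw [← hagree (a * s + b) (Finset.mem_image_of_mem _ hs)]; exact hr s hs⟩)
    (by
      intro χ
      obtain ⟨a, ha, b, r, hr⟩ := Combinatorics.exists_mono_homothetic_copy S χ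
      exact ⟨(a, b), ha, r, fun s hs => by simpa [smul_eq_mul] using hr s hs⟩)
  refine ⟨F.sup id, fun ψ => ?_⟩
  obtain ⟨⟨a, b⟩, hsub, ha, r, hr⟩ := hF ψ
  exact ⟨a, b, ha, fun s hs => Finset.le_sup (f := id) (hsub (Finset.mem_image_of_mem _ hs)),
    r, hr⟩

lemma radoSingle (p q : ℕ) (hp : 0 < p) (hq : 0 < q) :
    ∀ k : ℕ, ∃ N : ℕ, ∀ (κ : Type) (_ : DecidableEq κ) (C : Finset κ), C.card ≤ k →
      ∀ (χ : ℕ → κ) (D : ℕ), 0 < D → (∀ n, 1 ≤ n → n ≤ N → χ (D * n) ∈ C) →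
      ∃ a t, 0 < a ∧ 0 < t ∧ a + q * t ≤ N ∧ p * t ≤ N ∧
        χ (D * a) = χ (D * (a + q * t)) ∧ χ (D * a) = χ (D * (p * t)) := by
  intro k
  induction k with
  | zero =>
    refine ⟨1, fun κ _ C hC χ D hD hin => ?_⟩
    have h0 : C = ∅ := Finset.card_eq_zero.1 (Nat.le_zero.1 hC)
    have := hin 1 le_rfl le_rfl
    rw [h0] at this
    exact absurd this (Finset.notMem_empty _)
  | succ k IH =>
    obtain ⟨N', hIH⟩ := IH
    obtain ⟨Mv, hMv⟩ := vdwFin (k + 2) (Finset.Icc 1 (N' + 1))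
    refine ⟨(p + q) * Mv, fun κ _ C hC χ D hD hin => ?_⟩
    classical
    -- build the collapsing coloring
    set ψ : ℕ → Fin (k + 2) := fun n =>
      if h : χ (D * (q * n)) ∈ C then
        Fin.castLE (by omega) (C.equivFin ⟨χ (D * (q * n)), h⟩)
      else Fin.last (k + 1) with hψ
    obtain ⟨a, b, ha, hbound, r₀, hr₀⟩ := hMv ψ
    -- all relevant points are in C
    have hrange : ∀ s ∈ Finset.Icc 1 (N' + 1), 1 ≤ a * s + b ∧ q * (a * s + b) ≤ (p + q) * Mv := by
      intro s hs
      obtain ⟨hs1, hs2⟩ := Finset.mem_Icc.1 hs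
      constructor
      · nlinarith
      · have := hbound s hs
        nlinarith
    have hinC : ∀ s ∈ Finset.Icc 1 (N' + 1), χ (D * (q * (a * s + b))) ∈ C := by
      intro s hs
      obtain ⟨h1, h2⟩ := hrange s hs
      exact hin _ (by nlinarith) h2
    have hmono : ∀ s ∈ Finset.Icc 1 (N' + 1), ∀ s' ∈ Finset.Icc 1 (N' + 1),
        χ (D * (q * (a * s + b))) = χ (D * (q * (a * s' + b))) := by
      intro s hs s' hs'
      have h1 := hr₀ s hs
      have h2 := hr₀ s' hs'
      rw [hψ] at h1 h2
      simp only [dif_pos (hinC s hs)] at h1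
      simp only [dif_pos (hinC s' hs')] at h2
      have := h1.trans h2.symm
      have := Fin.castLE_injective (by omega : C.card ≤ k + 2) this
      have := C.equivFin.injective this
      exact congrArg Subtype.val this
    have h1S : (1 : ℕ) ∈ Finset.Icc 1 (N' + 1) := Finset.mem_Icc.2 ⟨le_rfl, by omega⟩
    set r : κ := χ (D * (q * (a * 1 + b))) with hr
    by_cases hcase : ∃ i, 1 ≤ i ∧ i ≤ N' ∧ χ (D * (p * (a * i))) = r
    · obtain ⟨i, hi1, hi2, hival⟩ := hcase
      have hiS : (1 + i) ∈ Finset.Icc 1 (N' + 1) := Finset.mem_Icc.2 ⟨by omega, by omega⟩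
      have hb := hbound (1 + i) hiS
      have hai : a * i ≤ Mv := by nlinarith
      have haib : a * (1 + i) + b ≤ Mv := hb
      refine ⟨q * (a * 1 + b), a * i, by positivity, by positivity, ?_, ?_, ?_, ?_⟩
      · calc q * (a * 1 + b) + q * (a * i) = q * (a * (1 + i) + b) := by ring
          _ ≤ q * Mv := Nat.mul_le_mul_left _ haib
          _ ≤ (p + q) * Mv := Nat.mul_le_mul_right _ (by omega)
      · calc p * (a * i) ≤ p * Mv := Nat.mul_le_mul_left _ hai
          _ ≤ (p + q) * Mv := Nat.mul_le_mul_right _ (by omega)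
      · have heq : q * (a * 1 + b) + q * (a * i) = q * (a * (1 + i) + b) := by ring
        rw [heq]
        exact hmono 1 h1S (1 + i) hiS
      · exact hival.symm
    · push_neg at hcase
      have hrC : r ∈ C := hinC 1 h1S
      have hsub : ∀ n, 1 ≤ n → n ≤ N' → χ (D * (p * a) * n) ∈ C.erase r := by
        intro n h1 h2
        refine Finset.mem_erase.2 ⟨?_, ?_⟩
        · have := hcase n h1 h2
          rw [show D * (p * a) * n = D * (p * (a * n)) by ring]
          exact this
        · rw [show D * (p * a) * n = D * (p * (a * n)) by ring]
          have hb := hbound (N' + 1) (Finset.mem_Icc.2 ⟨by omega, le_rfl⟩)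
          have haN : a * n ≤ Mv := by nlinarith
          refine hin _ (Nat.mul_pos hp (Nat.mul_pos ha h1)) ?_
          calc p * (a * n) ≤ p * Mv := Nat.mul_le_mul_left _ haN
            _ ≤ (p + q) * Mv := Nat.mul_le_mul_right _ (by omega)
      have hcard : (C.erase r).card ≤ k := by
        rw [Finset.card_erase_of_mem hrC]; omega
      obtain ⟨a'', t'', ha'', ht'', hb1, hb2, he1, he2⟩ :=
        hIH κ ‹_› (C.erase r) hcard χ (D * (p * a)) (by positivity) hsub
      have hb := hbound (N' + 1) (Finset.mem_Icc.2 ⟨by omega, le_rfl⟩)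
      have haN : a * N' ≤ Mv := by nlinarith
      refine ⟨p * a * a'', p * a * t'', by positivity, by positivity, ?_, ?_, ?_, ?_⟩
      · calc p * a * a'' + q * (p * a * t'') = p * (a * (a'' + q * t'')) := by ring
          _ ≤ p * (a * N') := Nat.mul_le_mul_left _ (Nat.mul_le_mul_left _ hb1)
          _ ≤ p * Mv := Nat.mul_le_mul_left _ haN
          _ ≤ (p + q) * Mv := Nat.mul_le_mul_right _ (by omega)
      · calc p * (p * a * t'') = p * (a * (p * t'')) := by ring
          _ ≤ p * (a * N') := Nat.mul_le_mul_left _ (Nat.mul_le_mul_left _ hb2)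
          _ ≤ p * Mv := Nat.mul_le_mul_left _ haN
          _ ≤ (p + q) * Mv := Nat.mul_le_mul_right _ (by omega)
      · rw [show D * (p * a * a'') = D * (p * a) * a'' by ring,
          show D * (p * a * a'' + q * (p * a * t'')) = D * (p * a) * (a'' + q * t'') by ring]
        exact he1
      · rw [show D * (p * a * a'') = D * (p * a) * a'' by ring,
          show D * (p * (p * a * t'')) = D * (p * a) * (p * t'') by ring]
        exact he2

/-- let `S` be a nontrivial subgroup of `(ℚ,+)`, `B` a `j × u`
rational matrix kernel partition regular over ℚ, and `c ∈ S \ {0}`. Then the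
`(j+u) × 3u` block matrix `D = [[B, O, O], [I, cI, −cI]]` is kernel partition
regular over `S`. (The row index `Fin j ⊕ Fin u` and column index
`Fin u ⊕ (Fin u ⊕ Fin u)` realise the block structure.) -/
theorem stmt11 (S : AddSubgroup ℚ) (hS : ∃ s ∈ S, s ≠ (0 : ℚ))
    (j u : ℕ) (B : Fin j → Fin u → ℚ)
    (hB : KPRQ B (Set.univ : Set ℚ))
    (c : ℚ) (hc : c ∈ S) (hc0 : c ≠ 0) :
    KPRQ
      (fun (p : Fin j ⊕ Fin u) (q : Fin u ⊕ (Fin u ⊕ Fin u)) =>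
        match p, q with
        | Sum.inl r, Sum.inl t => B r t
        | Sum.inl _, Sum.inr _ => 0
        | Sum.inr i, Sum.inl t => if i = t then 1 else 0
        | Sum.inr i, Sum.inr (Sum.inl t) => if i = t then c else 0
        | Sum.inr i, Sum.inr (Sum.inr t) => if i = t then -c else 0)
      (S : Set ℚ) := by
  classical
  intro k φ
  obtain _ | k := k
  · exact (φ 0).elim0
  -- basic data
  set θ : ℤ → Fin (k + 1) := fun z => φ (c * (z : ℚ)) with hθ
  set p : ℕ := c.num.natAbs with hpdef
  have hp : 0 < p := Int.natAbs_pos.2 (Rat.num_ne_zero.2 hc0)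
  set q : ℕ := c.den with hqdef
  have hq : 0 < q := c.pos
  have hdQ : ((c.den : ℚ)) ≠ 0 := Nat.cast_ne_zero.2 c.den_nz
  have hden : (c.num : ℚ) = c * (c.den : ℚ) := by
    calc (c.num : ℚ) = ((c.num : ℚ) / (c.den : ℚ)) * (c.den : ℚ) := (div_mul_cancel₀ _ hdQ).symm
      _ = c * (c.den : ℚ) := by rw [Rat.num_div_den]
  -- Step 1: compactness for B
  obtain ⟨F, hF⟩ := compactColoring (α := ℚ) (ι := Fin u → ℚ) (k + 1)
    (fun x => Finset.image x Finset.univ)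
    (fun x χ => (∀ i, x i ≠ 0) ∧ (∀ r, mulVecQ B x r = 0) ∧ (∀ i i', χ (x i) = χ (x i')))
    (by
      rintro x χ χ' hagree ⟨h1, h2, h3⟩
      refine ⟨h1, h2, fun i i' => ?_⟩
      rw [← hagree (x i) (Finset.mem_image_of_mem x (Finset.mem_univ i)),
        ← hagree (x i') (Finset.mem_image_of_mem x (Finset.mem_univ i'))]
      exact h3 i i')
    (by
      intro χ
      obtain ⟨x, hx1, hx2, hx3⟩ := hB (k + 1) χ
      exact ⟨x, fun i => (hx1 i).2, hx2, hx3⟩)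
  -- Step 2: common denominator and integer images
  set L₀ : ℕ := ∏ f ∈ F, f.den with hL₀def
  have hL₀ : 0 < L₀ := Finset.prod_pos (fun f _ => f.pos)
  set m : ℚ → ℤ := fun ξ => ((L₀ : ℚ) * ξ).num with hmdef
  have hm : ∀ f ∈ F, ((m f : ℤ) : ℚ) = (L₀ : ℚ) * f := by
    intro f hf
    obtain ⟨k', hk'⟩ := Finset.dvd_prod_of_mem (fun f => f.den) hf
    have hfdQ : ((f.den : ℚ)) ≠ 0 := Nat.cast_ne_zero.2 f.den_nz
    have hnum : ((f.den : ℚ)) * f = (f.num : ℚ) := by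
      calc ((f.den : ℚ)) * f = (f.den : ℚ) * ((f.num : ℚ) / (f.den : ℚ)) := by
            rw [Rat.num_div_den]
        _ = (f.num : ℚ) := by field_simp
    have : (L₀ : ℚ) * f = (((f.num * k' : ℤ)) : ℚ) := by
      rw [hL₀def, hk']
      push_cast
      rw [mul_comm (f.den : ℚ) (k' : ℚ), mul_assoc, hnum]
      ring
    rw [hmdef]
    simp only [this, Rat.num_intCast]
  have hm0 : ∀ f ∈ F, f ≠ 0 → m f ≠ 0 := by
    intro f hf hf0 hcon
    have := hm f hf
    rw [hcon] at this
    simp only [Int.cast_zero] at this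
    have : f = 0 := by
      rcases mul_eq_zero.1 this.symm with h | h
      · exact absurd h (by positivity)
      · exact h
    exact hf0 this
  set M : Finset ℤ := F.image m with hMdef
  -- Step 3: Rado single-equation lemma, product coloring over M
  set κR : Type := ({z // z ∈ M} → Fin (k + 1)) with hκR
  set χR : ℕ → κR := fun n z => θ ((n : ℤ) * z.1) with hχR
  obtain ⟨N, hN⟩ := radoSingle p q hp hq (Fintype.card κR)
  obtain ⟨a, t, ha, ht, _, _, he1, he2⟩ := hN κR inferInstance Finset.univ
    (le_of_eq (Finset.card_univ)) χR 1 one_pos (fun n _ _ => Finset.mem_univ _)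
  have hpat1 : ∀ z ∈ M, θ ((a : ℤ) * z) = θ (((a : ℤ) + (q : ℤ) * (t : ℤ)) * z) := by
    intro z hz
    have := congrFun he1 ⟨z, hz⟩
    rw [hχR] at this
    simpa using this
  have hpat2 : ∀ z ∈ M, θ ((a : ℤ) * z) = θ ((p : ℤ) * (t : ℤ) * z) := by
    intro z hz
    have := congrFun he2 ⟨z, hz⟩
    rw [hχR] at this
    push_cast at this
    rw [show ((p : ℤ) * t * z) = (p : ℤ) * (t : ℤ) * z from rfl]
    simpa [mul_assoc] using this
  -- Step 4: get solution of B monochromatic under ψ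
  set ψ : ℚ → Fin (k + 1) := fun ξ => θ ((p : ℤ) * (t : ℤ) * m ξ) with hψ
  obtain ⟨x, hsub, hx0, hxeq, hxmono⟩ := hF ψ
  have hxF : ∀ i, x i ∈ F := fun i => hsub (Finset.mem_image_of_mem x (Finset.mem_univ i))
  have hmiQ : ∀ i, ((m (x i) : ℤ) : ℚ) = (L₀ : ℚ) * x i := fun i => hm (x i) (hxF i)
  have hmi0 : ∀ i, m (x i) ≠ 0 := fun i => hm0 (x i) (hxF i) (hx0 i)
  have hmiM : ∀ i, m (x i) ∈ M := fun i => Finset.mem_image_of_mem m (hxF i)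
  -- Step 5: choose A₁, A₂ based on sign of c.num
  obtain ⟨A₁, A₂, hA₁, hA₂, hA1c, hA2c, hkey⟩ :
      ∃ A₁ A₂ : ℤ, A₁ ≠ 0 ∧ A₂ ≠ 0 ∧
        (∀ z ∈ M, θ (A₁ * z) = θ ((p : ℤ) * (t : ℤ) * z)) ∧
        (∀ z ∈ M, θ (A₂ * z) = θ ((p : ℤ) * (t : ℤ) * z)) ∧
        c * ((p : ℚ) * (t : ℚ)) + c * c * (A₁ : ℚ) - c * c * (A₂ : ℚ) = 0 := by
    have hqQ : ((q : ℕ) : ℚ) = (c.den : ℚ) := by rw [hqdef]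
    rcases Int.natAbs_eq c.num with hsgn | hsgn
    · -- c.num = p
      refine ⟨(a : ℤ), (a : ℤ) + (q : ℤ) * t, by positivity, by positivity,
        hpat2, fun z hz => (hpat1 z hz).symm.trans (hpat2 z hz), ?_⟩
      have hnum : ((p : ℤ) : ℚ) = (c.num : ℚ) := by rw [hpdef]; exact_mod_cast hsgn.symm
      push_cast
      push_cast at hnum
      rw [hden] at hnum
      rw [hqQ]
      linear_combination (c * (t : ℚ)) * hnum
    · -- c.num = -p
      refine ⟨(a : ℤ) + (q : ℤ) * t, (a : ℤ), by positivity, by positivity,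
        fun z hz => (hpat1 z hz).symm.trans (hpat2 z hz), hpat2, ?_⟩
      have hnum : ((p : ℤ) : ℚ) = -(c.num : ℚ) := by
        rw [hpdef]
        have : (c.num : ℚ) = -((c.num.natAbs : ℤ) : ℚ) := by exact_mod_cast hsgn
        rw [this]; ring
      push_cast
      push_cast at hnum
      rw [hden] at hnum
      rw [hqQ]
      linear_combination (c * (t : ℚ)) * hnum
  -- Step 6: assemble the solution vector
  set y : Fin u → ℚ := fun i => c * (((p : ℤ) * (t : ℤ) * m (x i) : ℤ) : ℚ) with hy
  set w : Fin u → ℚ := fun i => c * ((A₁ * m (x i) : ℤ) : ℚ) with hw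
  set v : Fin u → ℚ := fun i => c * ((A₂ * m (x i) : ℤ) : ℚ) with hv
  refine ⟨Sum.elim y (Sum.elim w v), ?_, ?_, ?_⟩
  · -- membership
    have hmem : ∀ z : ℤ, z ≠ 0 → c * (z : ℚ) ∈ (S : Set ℚ) \ {0} := by
      intro z hz
      constructor
      · have := AddSubgroup.zsmul_mem S hc z
        rwa [zsmul_eq_mul, mul_comm] at this
      · simp only [Set.mem_singleton_iff]
        exact mul_ne_zero hc0 (Int.cast_ne_zero.2 hz)
    rintro (i | i | i)
    · exact hmem _ (by
        have := hmi0 i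
        positivity)
    · exact hmem _ (mul_ne_zero hA₁ (hmi0 i))
    · exact hmem _ (mul_ne_zero hA₂ (hmi0 i))
  · -- equations
    rintro (r | i)
    · show mulVecQ _ _ _ = 0
      rw [mulVecQ, finsum_eq_sum_of_fintype, Fintype.sum_sum_type, Fintype.sum_sum_type]
      simp only [Sum.elim_inl, Sum.elim_inr, zero_mul]
      rw [Finset.sum_const_zero]
      have hterm : ∀ i, B r i * y i = (c * (p : ℚ) * (t : ℚ) * (L₀ : ℚ)) * (B r i * x i) := by
        intro i
        rw [hy]
        push_cast [hmiQ i]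
        ring
      rw [Finset.sum_congr rfl (fun i _ => hterm i), ← Finset.mul_sum]
      have hzero : ∑ i, B r i * x i = 0 := by
        have := hxeq r
        rwa [mulVecQ, finsum_eq_sum_of_fintype] at this
      rw [hzero]
      ring
    · show mulVecQ _ _ _ = 0
      rw [mulVecQ, finsum_eq_sum_of_fintype, Fintype.sum_sum_type, Fintype.sum_sum_type]
      simp only [Sum.elim_inl, Sum.elim_inr, ite_mul, zero_mul, one_mul,
        Finset.sum_ite_eq, Finset.mem_univ, if_true]
      rw [hy, hw, hv]
      push_cast
      linear_combination ((m (x i) : ℤ) : ℚ) * hkey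
  · -- monochromatic
    have hcol : ∀ (jx : Fin u ⊕ (Fin u ⊕ Fin u)), ∃ i : Fin u,
        φ (Sum.elim y (Sum.elim w v) jx) = ψ (x i) := by
      rintro (i | i | i)
      · exact ⟨i, rfl⟩
      · refine ⟨i, ?_⟩
        show φ (w i) = _
        rw [hw]
        exact hA1c (m (x i)) (hmiM i)
      · refine ⟨i, ?_⟩
        show φ (v i) = _
        rw [hv]
        exact hA2c (m (x i)) (hmiM i)
    intro j1 j2
    obtain ⟨i1, hi1⟩ := hcol j1
    obtain ⟨i2, hi2⟩ := hcol j2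
    rw [hi1, hi2]
    exact hxmono i1 i2
end
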